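/- Define g : ℝ² → ℝ by g(x₁,x₂) = 1/(1 + e^{−x₁}) + 1/(1 + e^{−x₂}) and let x* = (−10,−10). Then for every ε ∈ (0,1] and every x ∈ [−10,10]², g is (ε, 1, x*)-SLQC at x; that is, either g(x) − g(x*) ≤ ε, or ∇g(x) ≠ 0 and ⟨∇g(x), y − x⟩ ≤ 0 for every y in the closed ball of radius ε centered at x*. -/

import Mathlib

/-!
The gradient of `g` is `(σ'(x₀), σ'(x₁))` with `σ' = σ (1 - σ) > 0`, so it never vanishes. Let
`a ≥ b` be the coordinates of `x` and `u, v ≤ -10 + ε` the matching ones of `y`. The smaller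
coordinate contributes at most `e⁻¹⁰ ε`: `σ' ≤ exp` gives `σ'(b) (v - b) ≤ e^b (-10 + ε - b)`
whenever the right side is nonnegative. If `g x - g x* > ε` then
`σ(a) - σ(-10) > ε / 2`, and the larger one contributes `σ'(a) (u - a) ≤ -e⁻¹⁰ ε`: for `a ≥ -1`
because `σ'(a) ≥ e^{-|a|} / 4` and `a - u ≥ 8`; for `a ≤ -1` because the mean value theorem gives
`σ(a) (a + 10) ≥ σ(a) - σ(-10) > ε / 2`, whence
`σ'(a) (a - u) ≥ (1 - σ(a)) σ(a) (a + 10 - ε) > (1 - σ(a)) (1 / 2 - σ(a)) ε ≥ ε / 9`,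
using `σ(a) ≤ σ(-1) ≤ 1 / 3`.
-/

open RealInnerProductSpace

noncomputable def g13 (x : EuclideanSpace ℝ (Fin 2)) : ℝ :=
  1 / (1 + Real.exp (-(x 0))) + 1 / (1 + Real.exp (-(x 1)))

noncomputable def xstar13 : EuclideanSpace ℝ (Fin 2) :=
  (WithLp.equiv 2 (Fin 2 → ℝ)).symm ![-10, -10]

open Real Set

lemma hasGradientAt_sum_comp_apply {ι : Type*} [Fintype ι] {φ : ℝ → ℝ}
    (x : EuclideanSpace ℝ ι) (hφ : ∀ i, DifferentiableAt ℝ φ (x i)) :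
    HasGradientAt (fun y : EuclideanSpace ℝ ι => ∑ i, φ (y i))
      (WithLp.toLp 2 fun i => deriv φ (x i)) x := by
  have hsum : HasFDerivAt (fun y : EuclideanSpace ℝ ι => ∑ i, φ (y i))
      (∑ i, deriv φ (x i) • EuclideanSpace.proj (𝕜 := ℝ) i) x :=
    HasFDerivAt.fun_sum fun i _ =>
      (hφ i).hasDerivAt.comp_hasFDerivAt x (PiLp.hasFDerivAt_apply (𝕜 := ℝ) 2 x i)
  rw [hasGradientAt_iff_hasFDerivAt]
  refine hsum.congr_fderiv ?_
  ext v
  simp [PiLp.inner_apply, mul_comm]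

lemma sigmoid_le_exp (t : ℝ) : sigmoid t ≤ exp t := by
  rw [sigmoid_def, ← inv_inv (exp t), ← exp_neg]
  exact inv_anti₀ (exp_pos _) (by linarith [exp_pos (-t)])

lemma deriv_sigmoid_eq (t : ℝ) : deriv sigmoid t = sigmoid t * (1 - sigmoid t) :=
  (hasDerivAt_sigmoid t).deriv

lemma deriv_sigmoid_pos (t : ℝ) : 0 < deriv sigmoid t := by
  rw [deriv_sigmoid_eq]
  exact mul_pos (sigmoid_pos t) (sub_pos.2 (sigmoid_lt_one t))

lemma deriv_sigmoid_le_sigmoid (t : ℝ) : deriv sigmoid t ≤ sigmoid t := by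
  rw [deriv_sigmoid_eq]
  exact mul_le_of_le_one_right (sigmoid_pos t).le (by linarith [sigmoid_pos t])

lemma deriv_sigmoid_neg (t : ℝ) : deriv sigmoid (-t) = deriv sigmoid t := by
  simp only [deriv_sigmoid_eq, sigmoid_neg]
  ring

lemma exp_neg_div_four_le_deriv_sigmoid {t : ℝ} (ht : 0 ≤ t) :
    exp (-t) / 4 ≤ deriv sigmoid t := by
  have half : 1 / 2 ≤ sigmoid t := by
    simpa [sigmoid_zero] using sigmoid_le ht
  rw [deriv_sigmoid_eq, ← sigmoid_neg, ← sigmoid_mul_rexp_neg]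
  nlinarith [exp_pos (-t), mul_self_le_mul_self (by norm_num) half]

lemma exp_neg_abs_div_four_le_deriv_sigmoid (t : ℝ) : exp (-|t|) / 4 ≤ deriv sigmoid t := by
  rcases le_total 0 t with ht | ht
  · simpa [abs_of_nonneg ht] using exp_neg_div_four_le_deriv_sigmoid ht
  · simpa [abs_of_nonpos ht, deriv_sigmoid_neg] using
      exp_neg_div_four_le_deriv_sigmoid (neg_nonneg.2 ht)

lemma sigmoid_sub_le_mul_sub {c t : ℝ} (hct : c ≤ t) :
    sigmoid t - sigmoid c ≤ sigmoid t * (t - c) := by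
  refine (convex_Iic t).image_sub_le_mul_sub_of_deriv_le continuous_sigmoid.continuousOn
    differentiable_sigmoid.differentiableOn (fun s hs => ?_) c hct t (le_refl t) hct
  rw [interior_Iic] at hs
  exact (deriv_sigmoid_le_sigmoid s).trans (sigmoid_le hs.le)

lemma exp_mul_add_sub_le {c s ε : ℝ} (hcs : c ≤ s) (hε0 : 0 ≤ ε) (hε1 : ε ≤ 1) :
    exp s * (c + ε - s) ≤ exp c * ε := by
  have hexp : exp s * (c - s + 1) ≤ exp c :=
    calc exp s * (c - s + 1) ≤ exp s * exp (c - s) :=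
          mul_le_mul_of_nonneg_left (add_one_le_exp _) (exp_pos s).le
      _ = exp c := by rw [← exp_add]; ring_nf
  nlinarith [mul_le_mul_of_nonneg_right hexp hε0,
    mul_nonneg (exp_pos s).le (mul_nonneg (sub_nonneg.2 hcs) (sub_nonneg.2 hε1))]

lemma sigmoid_neg_one_le : sigmoid (-1) ≤ 1 / 3 := by
  have he : 2 ≤ exp 1 := by linarith [add_one_le_exp 1]
  rw [sigmoid_def, neg_neg, inv_le_comm₀ (by positivity) (by norm_num)]
  linarith

lemma deriv_sigmoid_mul_sub_le {L ε b v : ℝ} (hε0 : 0 ≤ ε) (hε1 : ε ≤ 1) (hb : -L ≤ b)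
    (hv : v ≤ -L + ε) : deriv sigmoid b * (v - b) ≤ exp (-L) * ε := by
  by_cases hbε : b ≤ -L + ε
  · calc deriv sigmoid b * (v - b) ≤ deriv sigmoid b * (-L + ε - b) :=
          mul_le_mul_of_nonneg_left (by linarith) (deriv_sigmoid_pos b).le
      _ ≤ exp b * (-L + ε - b) :=
          mul_le_mul_of_nonneg_right ((deriv_sigmoid_le_sigmoid b).trans (sigmoid_le_exp b))
            (by linarith)
      _ ≤ exp (-L) * ε := exp_mul_add_sub_le hb hε0 hε1
  · nlinarith [deriv_sigmoid_pos b, exp_pos (-L)]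

lemma exp_neg_mul_le_deriv_sigmoid_mul_sub {L ε a u : ℝ} (hL : 8 ≤ L) (hε0 : 0 ≤ ε)
    (hε1 : ε ≤ 1) (ha : a ∈ Icc (-L) L) (hu : u ≤ -L + ε)
    (hgap : ε / 2 < sigmoid a - sigmoid (-L)) :
    exp (-L) * ε ≤ deriv sigmoid a * (a - u) := by
  have hpos := deriv_sigmoid_pos a
  have hdist : deriv sigmoid a * (a + L - ε) ≤ deriv sigmoid a * (a - u) :=
    mul_le_mul_of_nonneg_left (by linarith) hpos.le
  rcases le_total (-1) a with ha1 | ha1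
  · have hexp : exp (-L) / 4 ≤ deriv sigmoid a :=
      calc exp (-L) / 4 ≤ exp (-|a|) / 4 := by gcongr; exact abs_le.2 ha
        _ ≤ deriv sigmoid a := exp_neg_abs_div_four_le_deriv_sigmoid a
    nlinarith [exp_pos (-L)]
  · have hσ : sigmoid a ≤ 1 / 3 := (sigmoid_le ha1).trans sigmoid_neg_one_le
    have hlip : ε / 2 < sigmoid a * (a + L) := by
      linarith [sigmoid_sub_le_mul_sub ha.1]
    have hL9 : exp (-L) ≤ 1 / 9 := by
      rw [exp_neg, inv_le_comm₀ (exp_pos L) (by norm_num)]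
      linarith [add_one_le_exp L]
    have hσ1 : 0 < 1 - sigmoid a := sub_pos.2 (sigmoid_lt_one a)
    have hσ0 := sigmoid_pos a
    calc exp (-L) * ε ≤ ε * ((1 - sigmoid a) * (1 / 2 - sigmoid a)) := by
          nlinarith [mul_nonneg (sub_nonneg.2 hσ) (by linarith : (0 : ℝ) ≤ 7 / 6 - sigmoid a)]
      _ ≤ (1 - sigmoid a) * (sigmoid a * (a + L) - sigmoid a * ε) := by
          nlinarith [mul_le_mul_of_nonneg_left hlip.le hσ1.le]
      _ = deriv sigmoid a * (a + L - ε) := by rw [deriv_sigmoid_eq]; ring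
      _ ≤ deriv sigmoid a * (a - u) := hdist

lemma deriv_sigmoid_mul_sub_add_nonpos {L ε a b u v : ℝ} (hL : 8 ≤ L) (hε0 : 0 ≤ ε)
    (hε1 : ε ≤ 1) (ha : a ∈ Icc (-L) L) (hb : b ∈ Icc (-L) L) (hu : u ≤ -L + ε)
    (hv : v ≤ -L + ε) (hgap : 2 * sigmoid (-L) + ε < sigmoid a + sigmoid b) :
    deriv sigmoid a * (u - a) + deriv sigmoid b * (v - b) ≤ 0 := by
  wlog hba : b ≤ a generalizing a b u v
  · linarith [this hb ha hv hu (by linarith) (le_of_not_ge hba)]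
  have hgap' : ε / 2 < sigmoid a - sigmoid (-L) := by linarith [sigmoid_le hba]
  linarith [exp_neg_mul_le_deriv_sigmoid_mul_sub hL hε0 hε1 ha hu hgap',
    deriv_sigmoid_mul_sub_le hε0 hε1 hb.1 hv]

theorem stmt_13 (ε : ℝ) (hε : ε ∈ Set.Ioc (0 : ℝ) 1)
    (x : EuclideanSpace ℝ (Fin 2))
    (hx0 : x 0 ∈ Set.Icc (-10 : ℝ) 10) (hx1 : x 1 ∈ Set.Icc (-10 : ℝ) 10) :
    g13 x - g13 xstar13 ≤ ε ∨
      (gradient g13 x ≠ 0 ∧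
        ∀ y ∈ Metric.closedBall xstar13 ε, ⟪gradient g13 x, y - x⟫ ≤ 0) := by
  refine or_iff_not_imp_left.2 fun hgap => ?_
  have hg : g13 = fun y => ∑ i, sigmoid (y i) := by
    funext y; simp [g13, sigmoid_def, Fin.sum_univ_two]
  have hgrad : gradient g13 x = WithLp.toLp 2 fun i => deriv sigmoid (x i) := by
    rw [hg]; exact (hasGradientAt_sum_comp_apply x fun _ => differentiableAt_sigmoid).gradient
  have hstar (i : Fin 2) : xstar13 i = -10 := by fin_cases i <;> rfl
  refine ⟨fun h => (deriv_sigmoid_pos (x 0)).ne' ?_, fun y hy => ?_⟩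
  · simpa [hgrad] using congrArg (· 0) h
  · have hy (i : Fin 2) : y i ≤ -10 + ε := by
      have := (PiLp.dist_apply_le y xstar13 i).trans (Metric.mem_closedBall.1 hy)
      rw [Real.dist_eq, hstar] at this
      linarith [le_abs_self (y i - -10)]
    have hgap' : 2 * sigmoid (-10) + ε < sigmoid (x 0) + sigmoid (x 1) := by
      simp only [hg, Fin.sum_univ_two, hstar, not_le] at hgap
      linarith
    rw [hgrad]
    simpa [PiLp.inner_apply, Fin.sum_univ_two, mul_comm] using
      deriv_sigmoid_mul_sub_add_nonpos (by norm_num) hε.1.le hε.2 hx0 hx1 (hy 0) (hy 1) hgap'
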